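/- Under the hypotheses that every colour class of an (s-1)-colouring of E(K_s) is a perfect matching and any 4-subset of vertices spanning two disjoint equally-coloured edges has its other two pairs of opposite edges also equally coloured, the operation + on colours defined by: c_i + c_j is the colour of y_i y_j, where x y_i has colour c_i and x y_j has colour c_j for any vertex x, is well-defined (independent of the choice of x). -/

import Mathlib

/-!
If `xy` and `x'y'` have the same colour and `x ≠ x'`, then `c(xx') = c(yy')`: by the 4-point
condition, or, if the two edges meet, because properness forces them to be the same edge.
Applied at `yᵢ` and at `yⱼ`, both `yᵢyᵢ'` and `yⱼyⱼ'` get the colour of `xx'`; applied once more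
to these two equally coloured edges, it gives `c(yᵢyⱼ) = c(yᵢ'yⱼ')`.
-/

section EdgeColouring

variable {V C : Type*}

def IsProperEdgeColouring (c : Sym2 V → C) : Prop :=
  ∀ ⦃v a b : V⦄, a ≠ v → b ≠ v → c s(v, a) = c s(v, b) → a = b

def FourPointCondition (c : Sym2 V → C) : Prop :=
  ∀ w x y z : V, w ≠ x → w ≠ y → w ≠ z → x ≠ y → x ≠ z → y ≠ z →
    c s(w, x) = c s(y, z) → c s(w, y) = c s(x, z) ∧ c s(x, y) = c s(w, z)

variable {c : Sym2 V → C} {x y x' y' : V}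

theorem IsProperEdgeColouring.ne_of_colour_eq (hc : IsProperEdgeColouring c) (hxy : x ≠ y)
    (hx'y' : x' ≠ y') (hxx' : x ≠ x') (h : c s(x, y) = c s(x', y')) : y ≠ y' := by
  rintro rfl
  exact hxx' (hc hxy hx'y' (by rwa [Sym2.eq_swap, Sym2.eq_swap (a := y)]))

theorem FourPointCondition.colour_eq_of_colour_eq (h4 : FourPointCondition c)
    (hc : IsProperEdgeColouring c) (hxy : x ≠ y) (hx'y' : x' ≠ y') (hxx' : x ≠ x')
    (h : c s(x, y) = c s(x', y')) : c s(x, x') = c s(y, y') := by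
  have hyy' := hc.ne_of_colour_eq hxy hx'y' hxx' h
  by_cases hxy' : x = y'
  · subst hxy'
    obtain rfl : y = x' := hc hxy.symm hx'y' (by rwa [Sym2.eq_swap (a := x')] at h)
    rw [Sym2.eq_swap]
  by_cases hyx' : y = x'
  · subst hyx'
    obtain rfl : x = y' := hc hxy hx'y'.symm (by rwa [Sym2.eq_swap] at h)
    rw [Sym2.eq_swap]
  exact (h4 x y x' y' hxy hxx' hxy' hyx' hyy' hx'y' h).1

end EdgeColouring

theorem stmt_13_general {V : Type*} (s : ℕ)
    (c : Sym2 V → Fin (s - 1))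
    (hpm : ∀ (i : Fin (s - 1)) (v : V), ∃! w : V, w ≠ v ∧ c s(v, w) = i)
    (h4 : ∀ w x y z : V, w ≠ x → w ≠ y → w ≠ z → x ≠ y → x ≠ z → y ≠ z →
      c s(w, x) = c s(y, z) → c s(w, y) = c s(x, z) ∧ c s(x, y) = c s(w, z))
    (i j : Fin (s - 1)) (hij : i ≠ j)
    (x x' yi yj yi' yj' : V)
    (hyi : yi ≠ x) (hyj : yj ≠ x) (hyi' : yi' ≠ x') (hyj' : yj' ≠ x')
    (ci : c s(x, yi) = i) (cj : c s(x, yj) = j)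
    (ci' : c s(x', yi') = i) (cj' : c s(x', yj') = j) :
    c s(yi, yj) = c s(yi', yj') := by
  have hc : IsProperEdgeColouring c := fun v a b ha hb h =>
    (hpm (c s(v, a)) v).unique ⟨ha, rfl⟩ ⟨hb, h.symm⟩
  have h4 : FourPointCondition c := h4
  by_cases hxx' : x = x'
  · subst hxx'
    obtain rfl := hc hyi hyi' (ci.trans ci'.symm)
    obtain rfl := hc hyj hyj' (cj.trans cj'.symm)
    rfl
  have hci := ci.trans ci'.symm
  have hcj := cj.trans cj'.symm
  have hyij : yi ≠ yj := fun h => hij (ci.symm.trans (h ▸ cj))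
  have hi : c s(x, x') = c s(yi, yi') := h4.colour_eq_of_colour_eq hc hyi.symm hyi'.symm hxx' hci
  have hj : c s(x, x') = c s(yj, yj') := h4.colour_eq_of_colour_eq hc hyj.symm hyj'.symm hxx' hcj
  exact h4.colour_eq_of_colour_eq hc (hc.ne_of_colour_eq hyi.symm hyi'.symm hxx' hci)
    (hc.ne_of_colour_eq hyj.symm hyj'.symm hxx' hcj) hyij (hi.symm.trans hj)

/-- given an `(s-1)`-edge-colouring of `K_s` where every colour class is a
perfect matching and opposite edges of a 4-set spanning two disjoint equally-coloured
edges are equally coloured, the addition on colours, `c_i + c_j :=` the colour of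
`y_i y_j` where `x y_i` has colour `c_i` and `x y_j` has colour `c_j`, is well-defined,
i.e. independent of the choice of the vertex `x`. -/
theorem stmt_13 {V : Type*} [Fintype V] [DecidableEq V] (s : ℕ) (hs : 2 ≤ s)
    (hcard : Fintype.card V = s) (c : Sym2 V → Fin (s - 1))
    (hpm : ∀ (i : Fin (s - 1)) (v : V), ∃! w : V, w ≠ v ∧ c s(v, w) = i)
    (h4 : ∀ w x y z : V, w ≠ x → w ≠ y → w ≠ z → x ≠ y → x ≠ z → y ≠ z →
      c s(w, x) = c s(y, z) → c s(w, y) = c s(x, z) ∧ c s(x, y) = c s(w, z))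
    (i j : Fin (s - 1)) (hij : i ≠ j)
    (x x' yi yj yi' yj' : V)
    (hyi : yi ≠ x) (hyj : yj ≠ x) (hyi' : yi' ≠ x') (hyj' : yj' ≠ x')
    (ci : c s(x, yi) = i) (cj : c s(x, yj) = j)
    (ci' : c s(x', yi') = i) (cj' : c s(x', yj') = j) :
    c s(yi, yj) = c s(yi', yj') :=
  stmt_13_general s c hpm h4 i j hij x x' yi yj yi' yj' hyi hyj hyi' hyj' ci cj ci' cj'
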